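/- Let σ = (2k, 2k−1, ..., 3, 2) ∈ S_{2k} be the (2k−1)-cycle fixing 1 and mapping j ↦ j−1 for 3 ≤ j ≤ 2k and 2 ↦ 2k. Let τ = τ_1 = (1 2)(3 4)···(2k−1, 2k) ∈ K, let g ∈ S_k fix 1 and map s ↦ k+2−s for 2 ≤ s ≤ k, and let g_1 ∈ S_k map s ↦ k+1−s. Then σ·τ·ḡ·σ^{-1} = τ_1·ḡ_1 and sgn(τ_1)·sgn(g)·sgn(g_1) = −1. -/

import Mathlib

/-!
Both claims are checked on the concrete coordinates `j = 2 s + r` of `Fin (2 k)`. The conjugation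
identity is verified pointwise, separately at `0`, at `1` and on `j ≥ 2`, where `σ` shifts down by
one. For the signs, `g g₁` is the rotation `s ↦ s + 1` of `Fin k`, a `k`-cycle of sign
`(-1)^(k-1)`, while `τ` is a product of `k` disjoint transpositions; the exponents add up to `2k - 1`.
-/

/-- The equivalence `Fin k × Fin 2 ≃ Fin (2*k)` sending (zero-based) `(s, r)` to `2*s + r`. -/
def pairEquiv (k : ℕ) : Fin k × Fin 2 ≃ Fin (2 * k) :=
  finProdFinEquiv.trans (finCongr (Nat.mul_comm k 2))

/-- For `g ∈ S_k`, the permutation `ḡ ∈ S_{2k}` with `ḡ(2s−1) = 2g(s)−1` and `ḡ(2s) = 2g(s)`. -/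
def barPerm {k : ℕ} (g : Equiv.Perm (Fin k)) : Equiv.Perm (Fin (2 * k)) :=
  (pairEquiv k).permCongr (Equiv.prodCongr g (Equiv.refl (Fin 2)))

/-- The element `τ = (1 2)(3 4)⋯(2k−1, 2k)` of `K ≤ S_{2k}`. -/
def tauK (k : ℕ) : Equiv.Perm (Fin (2 * k)) :=
  (pairEquiv k).permCongr (Equiv.prodCongr (Equiv.refl (Fin k)) (Equiv.swap (0 : Fin 2) 1))

lemma pairEquiv_apply_val {k : ℕ} (s : Fin k) (r : Fin 2) :
    (pairEquiv k (s, r)).val = 2 * s.val + r.val := by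
  simp only [pairEquiv, Equiv.trans_apply, finCongr_apply, Fin.val_cast, finProdFinEquiv_apply_val]
  omega

lemma pairEquiv_symm_apply_fst_val {k : ℕ} (j : Fin (2 * k)) :
    ((pairEquiv k).symm j).1.val = j.val / 2 := by
  simp [pairEquiv, Fin.divNat]

lemma pairEquiv_symm_apply_snd_val {k : ℕ} (j : Fin (2 * k)) :
    ((pairEquiv k).symm j).2.val = j.val % 2 := by
  simp [pairEquiv, Fin.modNat]

lemma barPerm_apply_val {k : ℕ} (g : Equiv.Perm (Fin k)) (j : Fin (2 * k)) :
    (barPerm g j).val = 2 * (g ((pairEquiv k).symm j).1).val + j.val % 2 := by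
  rw [barPerm, Equiv.permCongr_apply, Equiv.prodCongr_apply, Prod.map, pairEquiv_apply_val,
    Equiv.refl_apply, pairEquiv_symm_apply_snd_val]

lemma tauK_apply_val {k : ℕ} (j : Fin (2 * k)) :
    (tauK k j).val = 2 * (j.val / 2) + (1 - j.val % 2) := by
  have swap_val (r : Fin 2) : (Equiv.swap (0 : Fin 2) 1 r).val = 1 - r.val := by
    fin_cases r <;> rfl
  rw [tauK, Equiv.permCongr_apply, Equiv.prodCongr_apply, Prod.map, pairEquiv_apply_val,
    Equiv.refl_apply, swap_val, pairEquiv_symm_apply_fst_val, pairEquiv_symm_apply_snd_val]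

lemma tauK_barPerm_apply_val {k : ℕ} (g : Equiv.Perm (Fin k)) (j : Fin (2 * k)) :
    (tauK k (barPerm g j)).val = 2 * (g ((pairEquiv k).symm j).1).val + (1 - j.val % 2) := by
  rw [tauK_apply_val, barPerm_apply_val]
  omega

lemma sign_tauK (k : ℕ) : Equiv.Perm.sign (tauK k) = (-1) ^ k := by
  rw [tauK, Equiv.Perm.sign_permCongr, Equiv.prodCongr_refl_left,
    Equiv.Perm.sign_prodCongrRight, Finset.prod_const, Finset.card_univ, Fintype.card_fin,
    Equiv.Perm.sign_swap (by decide)]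

section

variable {k : ℕ} {g g₁ : Equiv.Perm (Fin k)}
  (hg : ∀ s : Fin k, (s.val = 0 → (g s).val = 0) ∧ (1 ≤ s.val → (g s).val = k - s.val))
  (hg₁ : ∀ s : Fin k, (g₁ s).val = k - 1 - s.val)
include hg hg₁

lemma mul_eq_finRotate_of_reflections : g * g₁ = finRotate k := by
  ext u
  obtain ⟨m, rfl⟩ : ∃ m, k = m + 1 := ⟨k - 1, by have := u.isLt; omega⟩
  have hlast : u = Fin.last m ↔ u.val = m := Fin.ext_iff
  rw [Equiv.Perm.mul_apply, coe_finRotate]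
  have := hg (g₁ u)
  have := hg₁ u
  split_ifs <;> omega

lemma mul_tauK_barPerm_mul_inv {σ : Equiv.Perm (Fin (2 * k))}
    (hσ : ∀ j : Fin (2 * k),
      (j.val = 0 → (σ j).val = 0) ∧ (j.val = 1 → (σ j).val = 2 * k - 1) ∧
        (2 ≤ j.val → (σ j).val = j.val - 1)) :
    σ * tauK k * barPerm g * σ⁻¹ = tauK k * barPerm g₁ := by
  rw [mul_inv_eq_iff_eq_mul]
  ext x
  simp only [Equiv.Perm.mul_apply]
  have := hσ x
  have := hσ (tauK k (barPerm g x))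
  have := tauK_barPerm_apply_val g x
  have := tauK_barPerm_apply_val g₁ (σ x)
  have := hg ((pairEquiv k).symm x).1
  have := hg₁ ((pairEquiv k).symm (σ x)).1
  have := pairEquiv_symm_apply_fst_val x
  have := pairEquiv_symm_apply_fst_val (σ x)
  omega

end

/-- Statement 15, in zero-based indexing: `σ ∈ S_{2k}` is the cycle fixing `0`, sending
`1 ↦ 2k−1` and `j ↦ j−1` for `2 ≤ j ≤ 2k−1` (one-based: `(2k, 2k−1, …, 3, 2)`);
`τ = τ₁ = (1 2)(3 4)⋯(2k−1, 2k)`; `g` fixes `0` and sends `s ↦ k−s` for `1 ≤ s ≤ k−1`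
(one-based: fixes `1`, `s ↦ k+2−s`); `g₁` sends `s ↦ k−1−s` (one-based: `s ↦ k+1−s`).
Then `σ τ ḡ σ⁻¹ = τ₁ ḡ₁` and `sgn(τ₁) sgn(g) sgn(g₁) = −1`. -/
theorem key_lemma_cycle_case (k : ℕ) (hk : 0 < k)
    (σ : Equiv.Perm (Fin (2 * k))) (g g₁ : Equiv.Perm (Fin k))
    (hσ : ∀ j : Fin (2 * k),
      (j.val = 0 → (σ j).val = 0) ∧ (j.val = 1 → (σ j).val = 2 * k - 1) ∧
        (2 ≤ j.val → (σ j).val = j.val - 1))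
    (hg : ∀ s : Fin k, (s.val = 0 → (g s).val = 0) ∧ (1 ≤ s.val → (g s).val = k - s.val))
    (hg₁ : ∀ s : Fin k, (g₁ s).val = k - 1 - s.val) :
    σ * tauK k * barPerm g * σ⁻¹ = tauK k * barPerm g₁ ∧
      (Equiv.Perm.sign (tauK k) : ℤ) * (Equiv.Perm.sign g : ℤ) * (Equiv.Perm.sign g₁ : ℤ) = -1 := by
  refine ⟨mul_tauK_barPerm_mul_inv hg hg₁ hσ, ?_⟩
  have hsign : Equiv.Perm.sign (tauK k) * (Equiv.Perm.sign g * Equiv.Perm.sign g₁) = -1 := by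
    rw [← map_mul, mul_eq_finRotate_of_reflections hg hg₁, sign_finRotate, sign_tauK, ← pow_add]
    exact Odd.neg_one_pow ⟨k - 1, by omega⟩
  rw [mul_assoc, ← Units.val_mul, ← Units.val_mul, hsign, Units.val_neg, Units.val_one]
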